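/- arXiv:1305.6557 — 3 statements merged into one kernel-verified Lean document; each statement's English description precedes it below -/
import Mathlib

section
/- Let V be a finite-dimensional real inner product space, let S be a self-adjoint endomorphism of V, and let π be a nonzero orthogonal projection in End(V) (a self-adjoint idempotent with π ≠ 0). Then Tr(exp(S)∘π) ≥ rank(π)·exp(Tr(S∘π)/rank(π)), where rank(π) denotes the dimension of the range of π. -/
/-!
Diagonalize `S` in an orthonormal eigenbasis `bᵢ` with eigenvalues `μᵢ`, so that `exp S` acts by
`exp μᵢ` on `bᵢ`. Then `Tr(f(S) ∘ π) = ∑ wᵢ f(μᵢ)` for `f = id, exp`, with weights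
`wᵢ = ⟪bᵢ, π bᵢ⟫ = ‖π bᵢ‖² ≥ 0` summing to `Tr π = rank π`, and the inequality is Jensen's
inequality for the convex function `exp` with these weights.
-/

open scoped InnerProductSpace

theorem ConvexOn.sum_mul_map_div_sum_le {ι : Type*} {s : Set ℝ} {f : ℝ → ℝ}
    (hf : ConvexOn ℝ s f) {t : Finset ι} {w p : ι → ℝ} (hw : ∀ i ∈ t, 0 ≤ w i)
    (hpos : 0 < ∑ i ∈ t, w i) (hp : ∀ i ∈ t, p i ∈ s) :
    (∑ i ∈ t, w i) * f ((∑ i ∈ t, w i * p i) / ∑ i ∈ t, w i) ≤ ∑ i ∈ t, w i * f (p i) := by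
  have h := hf.map_centerMass_le hw hpos hp
  simp only [Finset.centerMass, smul_eq_mul, Function.comp_apply] at h
  rw [← le_div_iff₀' hpos]
  simpa [div_eq_inv_mul] using h

theorem ContinuousLinearMap.exp_apply_of_apply_eq_smul {𝕂 E : Type*} [RCLike 𝕂]
    [NormedAddCommGroup E] [NormedSpace 𝕂 E] [CompleteSpace E]
    {S : E →L[𝕂] E} {x : E} {μ : 𝕂} (h : S x = μ • x) :
    NormedSpace.exp S x = NormedSpace.exp μ • x := by
  have hpow (n : ℕ) : (S ^ n) x = μ ^ n • x := by
    induction n with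
    | zero => simp
    | succ n ih => rw [pow_succ, mul_apply_eq_comp, h, map_smul, ih, smul_smul, ← pow_succ']
  have hS := (NormedSpace.exp_series_hasSum_exp' (𝕂 := 𝕂) S).mapL (apply 𝕂 E x)
  have hμ := (NormedSpace.exp_series_hasSum_exp' (𝕂 := 𝕂) μ).smul_const x
  refine hS.unique (hμ.congr_fun fun n => ?_)
  simp [hpow, smul_smul]

theorem LinearMap.trace_comp_eq_sum_of_apply_eq_smul {𝕜 E ι : Type*} [RCLike 𝕜]
    [NormedAddCommGroup E] [InnerProductSpace 𝕜 E] [FiniteDimensional 𝕜 E] [Fintype ι]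
    (b : OrthonormalBasis ι 𝕜 E) {T : E →ₗ[𝕜] E} {c : ι → 𝕜} (hT : ∀ i, T (b i) = c i • b i)
    (P : E →ₗ[𝕜] E) :
    trace 𝕜 E (T ∘ₗ P) = ∑ i, ⟪b i, P (b i)⟫_𝕜 * c i := by
  rw [trace_comp_comm', trace_eq_sum_inner _ b]
  refine Finset.sum_congr rfl fun i _ => ?_
  rw [comp_apply, hT, map_smul, inner_smul_right, mul_comm]

theorem IsIdempotentElem.sum_inner_apply_eq_finrank_range {𝕜 E ι : Type*} [RCLike 𝕜]
    [NormedAddCommGroup E] [InnerProductSpace 𝕜 E] [FiniteDimensional 𝕜 E] [Fintype ι]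
    {P : E →ₗ[𝕜] E} (hP : IsIdempotentElem P) (b : OrthonormalBasis ι 𝕜 E) :
    ∑ i, ⟪b i, P (b i)⟫_𝕜 = Module.finrank 𝕜 (LinearMap.range P) := by
  rw [← LinearMap.trace_eq_sum_inner, (LinearMap.IsIdempotentElem.isProj_range P hP).trace]

/-- **Convexity inequality for the exponential of a self-adjoint endomorphism.**
If `S` is a self-adjoint endomorphism of a finite-dimensional real inner product space `V`
and `π` is a nonzero orthogonal projection (self-adjoint idempotent), then
`Tr(exp(S) ∘ π) ≥ rank(π) · exp(Tr(S ∘ π) / rank(π))`. -/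
theorem trace_exp_comp_proj_ge {V : Type*} [NormedAddCommGroup V] [InnerProductSpace ℝ V]
    [FiniteDimensional ℝ V]
    (S π : V →L[ℝ] V)
    (hS : ContinuousLinearMap.adjoint S = S)
    (hπadj : ContinuousLinearMap.adjoint π = π)
    (hπidem : π ∘L π = π) (hπne : π ≠ 0) :
    LinearMap.trace ℝ V ((NormedSpace.exp S ∘L π).toLinearMap) ≥
      (Module.finrank ℝ (LinearMap.range π.toLinearMap) : ℝ) *
        Real.exp (LinearMap.trace ℝ V ((S ∘L π).toLinearMap) /
          (Module.finrank ℝ (LinearMap.range π.toLinearMap) : ℝ)) := by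
  have hSsymm : (S : V →ₗ[ℝ] V).IsSymmetric :=
    ContinuousLinearMap.isSelfAdjoint_iff_isSymmetric.mp hS
  let b := hSsymm.eigenvectorBasis rfl
  let μ := hSsymm.eigenvalues rfl
  have hSb (i) : S (b i) = μ i • b i := hSsymm.apply_eigenvectorBasis rfl i
  have hexpb (i) : NormedSpace.exp S (b i) = Real.exp (μ i) • b i := by
    rw [ContinuousLinearMap.exp_apply_of_apply_eq_smul (hSb i), Real.exp_eq_exp_ℝ]
  have hπpos : π.IsPositive := .of_isStarProjection ⟨hπidem, hπadj⟩
  have hrank : 0 < (Module.finrank ℝ (LinearMap.range π.toLinearMap) : ℝ) := by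
    rw [Nat.cast_pos, Module.finrank_pos_iff_of_free, Submodule.nontrivial_iff_ne_bot, Ne,
      LinearMap.range_eq_bot]
    exact fun h => hπne (ContinuousLinearMap.coe_injective h)
  have hweights := (ContinuousLinearMap.isIdempotentElem_toLinearMap_iff.mpr hπidem)
    |>.sum_inner_apply_eq_finrank_range b
  rw [ContinuousLinearMap.toLinearMap_comp, ContinuousLinearMap.toLinearMap_comp,
    LinearMap.trace_comp_eq_sum_of_apply_eq_smul b hexpb,
    LinearMap.trace_comp_eq_sum_of_apply_eq_smul b hSb, ← hweights]
  rw [← hweights] at hrank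
  exact convexOn_exp.sum_mul_map_div_sum_le (fun i _ => hπpos.inner_nonneg_right (b i)) hrank
    fun i _ => Set.mem_univ (μ i)
end

section
/- Let θ be a Cartan involution of a finite-dimensional real Lie algebra g and let I be a Lie ideal of g. Then θ(I) = I and the restriction of θ to I is a Cartan involution of the Lie algebra I; that is, the bilinear form (x,y) ↦ −B_I(x, θ(y)) on I is symmetric and positive definite, where B_I denotes the Killing form of the Lie algebra I. -/
/-!
Write `B_θ(x, y) = -B(x, θ y)`, an inner product on `g`. The `B_θ`-orthogonal complement of `I`
is `θ⁻¹(I^⊥)`, where `I^⊥` is the Killing-orthogonal ideal; so it is an ideal `K`, and `I ∩ K = 0`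
by positivity. Ideals meeting trivially commute, hence are Killing-orthogonal, so `K ⊆ I^⊥`. Then
for `x ∈ I`, `k ∈ K` we get `B_θ(k, θ x) = -B(k, x) = 0`, i.e. `θ x ∈ K^⊥ = I`. Since the Killing
form of an ideal is the restriction of that of `g`, symmetry and positivity pass to `I`.
-/

namespace LieIdeal

variable {R L : Type*} [CommRing R] [LieRing L] [LieAlgebra R L]

lemma le_killingCompl_of_disjoint {I J : LieIdeal R L} (h : Disjoint I J) :
    J ≤ I.killingCompl := by
  intro y hy
  rw [mem_killingCompl]
  intro x hx
  suffices LieAlgebra.ad R L x ∘ₗ LieAlgebra.ad R L y = 0 by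
    rw [killingForm_apply_apply, this, map_zero]
  ext z
  have hI : ⁅x, ⁅y, z⁆⁆ ∈ I := lie_mem_left R L I x _ hx
  have hJ : ⁅x, ⁅y, z⁆⁆ ∈ J := lie_mem_right R L J x _ (lie_mem_left R L J y z hy)
  rw [← LieSubmodule.disjoint_toSubmodule, Submodule.disjoint_def] at h
  simpa using h _ hI hJ

end LieIdeal

namespace LieAlgebra

variable {R L : Type*} [CommRing R] [LieRing L] [LieAlgebra R L]

noncomputable def twistedKillingForm (θ : L →ₗ⁅R⁆ L) : LinearMap.BilinForm R L :=
  -(killingForm R L).compl₂ θ.toLinearMap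

@[simp]
lemma twistedKillingForm_apply (θ : L →ₗ⁅R⁆ L) (x y : L) :
    twistedKillingForm θ x y = -killingForm R L x (θ y) :=
  rfl

lemma mem_orthogonal_twistedKillingForm_iff (θ : L →ₗ⁅R⁆ L) (I : LieIdeal R L) (x : L) :
    x ∈ (twistedKillingForm θ).orthogonal I ↔ x ∈ I.killingCompl.comap θ := by
  simp [LinearMap.BilinForm.mem_orthogonal_iff]

end LieAlgebra

open LieAlgebra

structure IsCartanInvolution {L : Type*} [LieRing L] [LieAlgebra ℝ L] (θ : L →ₗ⁅ℝ⁆ L) : Prop where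
  involutive : ∀ x, θ (θ x) = x
  killingForm_symm : ∀ x y, killingForm ℝ L x (θ y) = killingForm ℝ L y (θ x)
  killingForm_neg_pos : ∀ x, x ≠ 0 → 0 < -killingForm ℝ L x (θ x)

namespace IsCartanInvolution

variable {L : Type*} [LieRing L] [LieAlgebra ℝ L] {θ : L →ₗ⁅ℝ⁆ L}

lemma eq_zero_of_killingForm_eq_zero (hθ : IsCartanInvolution θ) {x : L}
    (hx : killingForm ℝ L x (θ x) = 0) : x = 0 := by
  by_contra hne
  simpa [hx] using hθ.killingForm_neg_pos x hne

lemma isSymm_twistedKillingForm (hθ : IsCartanInvolution θ) :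
    (twistedKillingForm θ).IsSymm :=
  ⟨fun x y => by simp [hθ.killingForm_symm x y]⟩

lemma nondegenerate_twistedKillingForm (hθ : IsCartanInvolution θ) :
    (twistedKillingForm θ).Nondegenerate :=
  hθ.isSymm_twistedKillingForm.isRefl.nondegenerate_iff_separatingLeft.mpr fun x hx =>
    hθ.eq_zero_of_killingForm_eq_zero (by simpa using hx x)

lemma disjoint_comap_killingCompl (hθ : IsCartanInvolution θ) (I : LieIdeal ℝ L) :
    Disjoint I (I.killingCompl.comap θ) := by
  rw [← LieSubmodule.disjoint_toSubmodule, Submodule.disjoint_def]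
  intro x hxI hxK
  exact hθ.eq_zero_of_killingForm_eq_zero ((LieIdeal.mem_killingCompl _ _ _).mp hxK x hxI)

lemma apply_mem_lieIdeal [Module.Finite ℝ L] (hθ : IsCartanInvolution θ) (I : LieIdeal ℝ L)
    {x : L} (hx : x ∈ I) : θ x ∈ I := by
  set B := twistedKillingForm θ
  suffices θ x ∈ B.orthogonal (B.orthogonal I) by
    rwa [B.orthogonal_orthogonal hθ.nondegenerate_twistedKillingForm
      hθ.isSymm_twistedKillingForm.isRefl] at this
  have hK : I.killingCompl.comap θ ≤ I.killingCompl :=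
    LieIdeal.le_killingCompl_of_disjoint (hθ.disjoint_comap_killingCompl I)
  rw [LinearMap.BilinForm.mem_orthogonal_iff]
  intro y hy
  rw [mem_orthogonal_twistedKillingForm_iff] at hy
  rw [twistedKillingForm_apply, hθ.involutive, LieModule.traceForm_comm,
    (LieIdeal.mem_killingCompl _ _ _).mp (hK hy) x hx, neg_zero]

lemma image_lieIdeal [Module.Finite ℝ L] (hθ : IsCartanInvolution θ) (I : LieIdeal ℝ L) :
    (θ : L → L) '' I = I := by
  refine (Set.image_subset_iff.mpr fun x hx => hθ.apply_mem_lieIdeal I hx).antisymm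
    fun x hx => ⟨θ x, hθ.apply_mem_lieIdeal I hx, hθ.involutive x⟩

lemma restrict [Module.Finite ℝ L] (hθ : IsCartanInvolution θ) (I : LieIdeal ℝ L)
    (θI : I →ₗ⁅ℝ⁆ I) (hθI : ∀ x : I, (θI x : L) = θ x) : IsCartanInvolution θI := by
  have hB : ∀ x y : I, killingForm ℝ I x y = killingForm ℝ L x y := fun x y => by
    rw [LieIdeal.killingForm_eq]; rfl
  refine ⟨fun x => ?_, fun x y => ?_, fun x hx => ?_⟩
  · ext; rw [hθI, hθI, hθ.involutive]
  · rw [hB, hB, hθI, hθI, hθ.killingForm_symm]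
  · rw [hB, hθI]
    exact hθ.killingForm_neg_pos x (by simpa using hx)

end IsCartanInvolution

/-- **The restriction of a Cartan involution to an ideal is a Cartan involution.**
Let `θ` be a Cartan involution of a finite-dimensional real Lie algebra `g` (an involutive
Lie algebra automorphism for which `B_θ(X,Y) = -B(X, θ Y)` is symmetric positive definite,
`B` being the Killing form of `g`) and let `I` be a Lie ideal of `g`.  Then `θ(I) = I`,
and for any map `θI : I → I` induced by `θ` (i.e. agreeing with `θ` on `I`), `θI` is an
involution and the bilinear form `(x, y) ↦ -B_I(x, θI y)` on `I` is symmetric and positive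
definite, where `B_I` is the Killing form of the Lie algebra `I`. -/
theorem cartanInvolution_restrict_lieIdeal {g : Type*} [LieRing g] [LieAlgebra ℝ g]
    [Module.Finite ℝ g]
    (θ : g →ₗ⁅ℝ⁆ g) (hinv : ∀ x, θ (θ x) = x)
    (hsymm : ∀ x y : g, killingForm ℝ g x (θ y) = killingForm ℝ g y (θ x))
    (hpos : ∀ x : g, x ≠ 0 → 0 < -(killingForm ℝ g x (θ x)))
    (I : LieIdeal ℝ g) :
    (θ : g → g) '' (I : Set g) = (I : Set g) ∧
    ∀ θI : ↥I →ₗ⁅ℝ⁆ ↥I, (∀ x : ↥I, (θI x : g) = θ (x : g)) →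
      (∀ x : ↥I, θI (θI x) = x) ∧
      (∀ x y : ↥I, killingForm ℝ ↥I x (θI y) = killingForm ℝ ↥I y (θI x)) ∧
      (∀ x : ↥I, x ≠ 0 → 0 < -(killingForm ℝ ↥I x (θI x))) := by
  have hθ : IsCartanInvolution θ := ⟨hinv, hsymm, hpos⟩
  refine ⟨hθ.image_lieIdeal I, fun θI hθI => ?_⟩
  obtain ⟨hinvI, hsymmI, hposI⟩ := hθ.restrict I θI hθI
  exact ⟨hinvI, hsymmI, hposI⟩
end

section
/- Let g be a finite-dimensional real semisimple Lie algebra whose Killing form B is anisotropic, i.e. B(X,X) ≠ 0 for every nonzero X ∈ g. Then B is negative definite. -/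
/-!
An anisotropic real quadratic form is definite: on the segment from a vector where it is negative
to one where it is positive, the intermediate value theorem produces an isotropic vector. The
Killing form cannot be positive definite: using it as an inner product makes every `ad X`
skew-adjoint, so `B(X, X) = tr ((ad X)²) = -tr ((ad X)* ad X) ≤ 0`.
-/

open scoped RealInnerProductSpace

theorem QuadraticMap.Anisotropic.posDef_or_negDef {V : Type*} [AddCommGroup V] [Module ℝ V]
    {Q : QuadraticForm ℝ V} (hQ : Q.Anisotropic) : Q.PosDef ∨ (-Q).PosDef := by
  by_contra! h
  simp only [PosDef, not_forall, not_lt, exists_prop, neg_apply, neg_nonpos] at h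
  obtain ⟨⟨Y, hY, hQY⟩, ⟨Z, hZ, hQZ⟩⟩ := h
  replace hQY : Q Y < 0 := hQY.lt_of_ne fun h => hY (hQ Y h)
  replace hQZ : 0 < Q Z := hQZ.lt_of_ne fun h => hZ (hQ Z h.symm)
  have hexpand (t : ℝ) : Q ((1 - t) • Y + t • Z) =
      (1 - t) ^ 2 * Q Y + t ^ 2 * Q Z + (1 - t) * t * polar Q Y Z := by
    rw [QuadraticMap.map_add (⇑Q), QuadraticMap.map_smul, QuadraticMap.map_smul, polar_smul_left,
      polar_smul_right, smul_eq_mul, smul_eq_mul, smul_eq_mul, smul_eq_mul]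
    ring
  obtain ⟨t, -, ht⟩ : ∃ t ∈ Set.Icc (0 : ℝ) 1,
      (1 - t) ^ 2 * Q Y + t ^ 2 * Q Z + (1 - t) * t * polar Q Y Z = 0 :=
    intermediate_value_Icc zero_le_one (by fun_prop) ⟨by simpa using hQY.le, by simpa using hQZ.le⟩
  rw [← hexpand] at ht
  have hsegment : (1 - t) • Y = -(t • Z) := eq_neg_of_add_eq_zero_left (hQ _ ht)
  have hsq : (1 - t) * (1 - t) * Q Y = t * t * Q Z := by
    simpa [QuadraticMap.map_smul] using congrArg Q hsegment
  -- the left side is `≤ 0` and the right side `≥ 0`, so both vanish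
  have ht0 : t = 0 := by
    have : t * t * Q Z = 0 := by nlinarith [mul_self_nonneg (1 - t), mul_self_nonneg t]
    simpa [hQZ.ne'] using this
  exact hQY.ne (by simpa [ht0] using hsq)

theorem LinearMap.trace_comp_self_nonpos_of_skew {E : Type*} [NormedAddCommGroup E]
    [InnerProductSpace ℝ E] [FiniteDimensional ℝ E] {A : E →ₗ[ℝ] E}
    (hA : ∀ x y, ⟪A x, y⟫ = -⟪x, A y⟫) : trace ℝ E (A ∘ₗ A) ≤ 0 := by
  have hadj : A.adjoint = -A := by
    refine ((LinearMap.eq_adjoint_iff _ _).2 fun x y => ?_).symm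
    simp [hA]
  have : A ∘ₗ A = -(A.adjoint ∘ₗ A) := by rw [hadj, neg_comp, neg_neg]
  rw [this, map_neg, neg_nonpos]
  exact A.isPositive_adjoint_comp_self.trace_nonneg

theorem LinearMap.BilinForm.trace_comp_self_nonpos_of_isSkewAdjoint {V : Type*} [AddCommGroup V]
    [Module ℝ V] [FiniteDimensional ℝ V] {B : LinearMap.BilinForm ℝ V} (hB : LinearMap.IsSymm B)
    (hpos : B.toQuadraticMap.PosDef) {A : V →ₗ[ℝ] V} (hA : B.IsSkewAdjoint A) :
    trace ℝ V (A ∘ₗ A) ≤ 0 := by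
  let core : InnerProductSpace.Core ℝ V :=
    { inner x y := B x y
      conj_inner_symm x y := hB.eq y x
      re_inner_nonneg x := by
        simpa using hpos.nonneg x
      definite x hx := by
        by_contra h
        exact (hpos x h).ne' hx
      add_left x y z := by simp
      smul_left x y r := by simp }
  let : NormedAddCommGroup V := core.toNormedAddCommGroup
  let : InnerProductSpace ℝ V := InnerProductSpace.ofCore core.toCore
  exact trace_comp_self_nonpos_of_skew fun x y =>
    (hA x y).trans (map_neg (B x) (A y))

theorem LieModule.traceForm_apply_self_nonpos {L M : Type*} [LieRing L] [LieAlgebra ℝ L]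
    [AddCommGroup M] [Module ℝ M] [LieRingModule L M] [LieModule ℝ L M] [FiniteDimensional ℝ M]
    {B : LinearMap.BilinForm ℝ M} (hB : LinearMap.IsSymm B) (hpos : B.toQuadraticMap.PosDef)
    (hinv : B.lieInvariant L) (x : L) : traceForm ℝ L M x x ≤ 0 :=
  LinearMap.BilinForm.trace_comp_self_nonpos_of_isSkewAdjoint hB hpos fun m n =>
    (hinv x m n).trans (map_neg (B m) ⁅x, n⁆).symm

theorem killingForm_apply_self_nonpos {L : Type*} [LieRing L] [LieAlgebra ℝ L]
    [FiniteDimensional ℝ L] (hpos : (killingForm ℝ L).toQuadraticMap.PosDef) (x : L) :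
    killingForm ℝ L x x ≤ 0 :=
  LieModule.traceForm_apply_self_nonpos (LieModule.traceForm_isSymm ℝ L L) hpos
    (LieModule.traceForm_lieInvariant ℝ L L) x

theorem killingForm_neg_definite_of_anisotropic_general {g : Type*} [LieRing g] [LieAlgebra ℝ g]
    [Module.Finite ℝ g]
    (hani : ∀ X : g, X ≠ 0 → killingForm ℝ g X X ≠ 0) :
    ∀ X : g, X ≠ 0 → killingForm ℝ g X X < 0 := by
  intro X hX
  have hanisotropic : (killingForm ℝ g).toQuadraticMap.Anisotropic :=
    fun Y hY => by_contra fun hY0 => hani Y hY0 hY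
  rcases hanisotropic.posDef_or_negDef with hpos | hneg
  · exact absurd (killingForm_apply_self_nonpos hpos X) (hpos X hX).not_ge
  · simpa using hneg X hX

/-- **Anisotropic Killing forms are negative definite.**
Let `g` be a finite-dimensional real semisimple Lie algebra (nondegenerate Killing form)
whose Killing form `B` is anisotropic, i.e. `B(X, X) ≠ 0` for every nonzero `X`.
Then `B` is negative definite. -/
theorem killingForm_neg_definite_of_anisotropic {g : Type*} [LieRing g] [LieAlgebra ℝ g]
    [Module.Finite ℝ g]
    (hss : (killingForm ℝ g).Nondegenerate)
    (hani : ∀ X : g, X ≠ 0 → killingForm ℝ g X X ≠ 0) :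
    ∀ X : g, X ≠ 0 → killingForm ℝ g X X < 0 :=
  killingForm_neg_definite_of_anisotropic_general hani
end
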